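/- Let p and q be perfect paths in a monomial algebra Λ such that p overlaps q. Then any nonzero path lying in pΛ ∩ Λq that does not belong to pΛq is itself a perfect path. -/

import Mathlib

/-! Combinatorial model of a monomial algebra `Λ = KQ/I`.

A finite quiver is given by source and target maps on a type of arrows.
A (nontrivial) path is encoded as a nonempty list of composable arrows;
the admissible monomial ideal `I` is encoded by its set `F` of minimal
generating paths, and a path is zero in `Λ` iff it contains a member of
`F` as a contiguous subpath (infix). -/

/-- A quiver structure on arrow type `E` with vertex type `V`. -/
structure QuiverData (V E : Type) where
  src : E → V
  tgt : E → V

namespace QuiverData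

variable {V E : Type} (Q : QuiverData V E)

/-- `l` is the list of arrows of a path of `Q`. -/
def IsPath (l : List E) : Prop := l.Chain' fun a b => Q.tgt a = Q.src b

/-- Two paths are composable: the target of the first equals the source of
the second (vacuously true if one of them is trivial). -/
def Composable (l m : List E) : Prop :=
  ∀ a ∈ l.getLast?, ∀ b ∈ m.head?, Q.tgt a = Q.src b

end QuiverData

/-- A monomial algebra, encoded combinatorially: a finite quiver together with
the set `F` of minimal paths generating the admissible monomial ideal `I`. -/
structure MonomialData (V E : Type) extends QuiverData V E where
  F : Set (List E)
  F_path : ∀ f ∈ F, toQuiverData.IsPath f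
  F_len : ∀ f ∈ F, 2 ≤ f.length
  F_min : ∀ f ∈ F, ∀ g, g <:+: f → (∃ f' ∈ F, f' <:+: g) → g = f
  admissible : ∃ N, ∀ l, toQuiverData.IsPath l → N ≤ l.length → ∃ f ∈ F, f <:+: l

namespace MonomialData

variable {V E : Type} (M : MonomialData V E)

/-- The path `l` is zero in `Λ`. -/
def IsZero (l : List E) : Prop := ∃ f ∈ M.F, f <:+: l

/-- `l` is a path which is nonzero in `Λ`. -/
def Nonzero (l : List E) : Prop := M.toQuiverData.IsPath l ∧ ¬ M.IsZero l

/-- A perfect pair of nonzero nontrivial paths, after Chen–Shen–Zhou. -/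
def PerfectPair (p q : List E) : Prop :=
  p ≠ [] ∧ q ≠ [] ∧ M.Nonzero p ∧ M.Nonzero q ∧
  M.toQuiverData.Composable p q ∧ M.IsZero (p ++ q) ∧
  (∀ q', q' ≠ [] → M.Nonzero q' → M.toQuiverData.Composable p q' →
      M.IsZero (p ++ q') → q <+: q') ∧
  (∀ p', p' ≠ [] → M.Nonzero p' → M.toQuiverData.Composable p' q →
      M.IsZero (p' ++ q) → p <:+ p')

/-- A perfect path: a path appearing in a perfect path sequence
`(p₁, …, pₙ, pₙ₊₁ = p₁)`, encoded by a periodic sequence of paths each of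
whose consecutive pairs is perfect. -/
def IsPerfect (p : List E) : Prop :=
  ∃ (n : ℕ) (s : ℕ → List E), 0 < n ∧ s 0 = p ∧ (∀ i, s (i + n) = s i) ∧
    ∀ i, M.PerfectPair (s i) (s (i + 1))

/-- `c` is the underlying cycle associated with the perfect path `p`:
the shortest cycle `c` with `p₁ ⋯ pₙ = cˡ` for some `l > 0`, for a perfect
path sequence through `p`. -/
def IsUnderlyingCycleOf (c p : List E) : Prop :=
  ∃ (n : ℕ) (s : ℕ → List E), 0 < n ∧ s 0 = p ∧ (∀ i, s (i + n) = s i) ∧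
    (∀ i, M.PerfectPair (s i) (s (i + 1))) ∧
    (∃ l, 0 < l ∧ ((List.range n).map s).flatten = (List.replicate l c).flatten) ∧
    (∀ c' l', 0 < l' → ((List.range n).map s).flatten = (List.replicate l' c').flatten →
      c.length ≤ c'.length)


/-- There is an overlap between the perfect paths `p` and `q` (`p` overlaps `q`). -/
def Overlap (p q : List E) : Prop :=
  ∃ x p' q' : List E, x ≠ [] ∧ p = p' ++ x ∧ q = x ++ q' ∧
    M.Nonzero (p' ++ x ++ q') ∧ (p = q → p' ≠ [] ∧ q' ≠ [])

/-- An elementary perfect path: a source in the Hasse quiver of the left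
divisibility order `⪯` on perfect paths, i.e. it is not a proper left divisor
of any perfect path. -/
def Elementary (p : List E) : Prop :=
  M.IsPerfect p ∧ ¬ ∃ q, M.IsPerfect q ∧ p <+: q ∧ p ≠ q

/-- A co-elementary perfect path: a sink in the Hasse quiver of `⪯`, i.e.
no proper left divisor of it is perfect. -/
def CoElementary (p : List E) : Prop :=
  M.IsPerfect p ∧ ¬ ∃ q, M.IsPerfect q ∧ q <+: p ∧ q ≠ p

/-- There is an arrow `q ⟶ p` in the Hasse quiver of `(ℙ_Λ, ⪯)`:
`p ≺ q` and no perfect path lies strictly between them. -/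
def HasseArrowPrec (q p : List E) : Prop :=
  M.IsPerfect p ∧ M.IsPerfect q ∧ p <+: q ∧ p ≠ q ∧
    ¬ ∃ r, M.IsPerfect r ∧ p <+: r ∧ p ≠ r ∧ r <+: q ∧ r ≠ q

end MonomialData

/-- Two cycles are equivalent (agree up to cyclic permutation): each is a
subpath of a power of the other. -/
def CyclesEquiv {E : Type} (c d : List E) : Prop :=
  ∃ m k, 0 < m ∧ 0 < k ∧ c <:+: (List.replicate m d).flatten ∧
    d <:+: (List.replicate k c).flatten

/-!
Write `r = a x b` with `p = a x` and `q = x b`. If `(p, p')` and `(q, q')` are perfect pairs, then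
`p' = b e` and `q' = e v` for some nontrivial `e`; the union `a x b` forms a perfect pair with the
intersection `e`, the intersection `x` forms one with the union `b e v`, and `b e v` is nonzero, so
`p'` and `q'` overlap again. Walking along perfect path sequences through `p` and `q` therefore
produces a chain of perfect pairs starting at `r`, which either reaches a member of one of the two
sequences (when `v` is trivial) or goes on forever. Its members are sublists of the finitely many
paths `pₖ qₖ`, so an infinite chain returns to an earlier member and closes up into a perfect path
sequence; in both cases perfection propagates back to `r` along the chain.
-/

theorem List.exists_overlap_of_prefix_of_suffix {α : Type*} {p q r : List α} (hp : p <+: r)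
    (hq : q <:+ r) (h : ¬ ∃ w, r = p ++ w ++ q) :
    ∃ a x b, p = a ++ x ∧ q = x ++ b ∧ r = a ++ x ++ b ∧ x ≠ [] := by
  obtain ⟨b, rfl⟩ := hp
  have hbq : b.length < q.length := by
    by_contra! hle
    obtain ⟨w, rfl⟩ := List.suffix_of_suffix_length_le hq (List.suffix_append p b) hle
    exact h ⟨w, by rw [List.append_assoc]⟩
  obtain ⟨a, ha⟩ := hq
  have hlen : a.length + q.length = p.length + b.length := by
    simpa using congrArg List.length ha
  obtain ⟨x, rfl⟩ :=
    List.prefix_of_prefix_length_le ⟨q, ha⟩ (List.prefix_append p b) (by omega)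
  refine ⟨a, x, b, rfl, ?_, rfl, ?_⟩
  · exact List.append_cancel_left (ha.trans (List.append_assoc a x b))
  · rintro rfl
    rw [List.append_nil] at hlen
    omega

theorem Function.Periodic.finite_range_nat {α : Type*} {f : ℕ → α} {n : ℕ} (h : f.Periodic n)
    (hn : 0 < n) : (Set.range f).Finite :=
  ((Set.finite_Iio n).image f).subset <| by
    rintro _ ⟨i, rfl⟩
    exact ⟨i % n, Nat.mod_lt i hn, h.map_mod_nat i⟩

theorem exists_seq_of_forall_exists {α : Type*} {P : α → Prop} {R : α → α → Prop} {a : α}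
    (ha : P a) (h : ∀ x, P x → ∃ y, R x y ∧ P y) :
    ∃ f : ℕ → α, f 0 = a ∧ ∀ n, P (f n) ∧ R (f n) (f (n + 1)) := by
  choose! g hg using h
  have hP : ∀ n, P (g^[n] a) := fun n => by
    induction n with
    | zero => exact ha
    | succ n ih => rw [Function.iterate_succ_apply']; exact (hg _ ih).2
  refine ⟨fun n => g^[n] a, rfl, fun n => ⟨hP n, ?_⟩⟩
  simp only [Function.iterate_succ_apply']
  exact (hg _ (hP n)).1

namespace QuiverData

variable {V E : Type} (Q : QuiverData V E) {l l' m m' : List E}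

theorem isPath_append : Q.IsPath (l ++ m) ↔ Q.IsPath l ∧ Q.IsPath m ∧ Q.Composable l m := by
  simp only [IsPath, Composable]
  exact List.isChain_append

variable {Q}

theorem IsPath.infix (h : Q.IsPath m) (hl : l <:+: m) : Q.IsPath l := List.IsChain.infix h hl

theorem composable_append_left_iff (hl' : l' ≠ []) :
    Q.Composable (l ++ l') m ↔ Q.Composable l' m := by
  simp only [Composable, List.getLast?_append_of_ne_nil _ hl']

theorem composable_append_right_iff (hm : m ≠ []) :
    Q.Composable l (m ++ m') ↔ Q.Composable l m := by
  simp only [Composable, List.head?_append_of_ne_nil _ hm]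

end QuiverData

namespace MonomialData

open QuiverData

variable {V E : Type} {M : MonomialData V E} {l m : List E}

theorem IsZero.mono (h : M.IsZero l) (hl : l <:+: m) : M.IsZero m :=
  let ⟨f, hf, hfl⟩ := h
  ⟨f, hf, hfl.trans hl⟩

theorem Nonzero.infix (h : M.Nonzero m) (hl : l <:+: m) : M.Nonzero l :=
  ⟨h.1.infix hl, fun hz => h.2 (hz.mono hl)⟩

section PerfectPair

variable {p q : List E}

theorem PerfectPair.prefix_of_isZero (h : M.PerfectPair p q) (hm : m ≠ []) (hnz : M.Nonzero m)
    (hc : M.Composable p m) (hz : M.IsZero (p ++ m)) : q <+: m :=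
  h.2.2.2.2.2.2.1 m hm hnz hc hz

theorem PerfectPair.suffix_of_isZero (h : M.PerfectPair p q) (hl : l ≠ []) (hnz : M.Nonzero l)
    (hc : M.Composable l q) (hz : M.IsZero (l ++ q)) : p <:+ l :=
  h.2.2.2.2.2.2.2 l hl hnz hc hz

theorem PerfectPair.left_unique {p' : List E} (h : M.PerfectPair p q)
    (h' : M.PerfectPair p' q) : p = p' := by
  have ⟨hp, _, hpnz, _, hpc, hpz, _⟩ := h
  have ⟨hp', _, hpnz', _, hpc', hpz', _⟩ := h'
  exact (List.IsSuffix.eq_of_length_le (h'.suffix_of_isZero hp hpnz hpc hpz)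
    (h.suffix_of_isZero hp' hpnz' hpc' hpz').length_le).symm

theorem isPerfect_of_periodic {s : ℕ → List E} {n : ℕ} (hn : 0 < n) (hper : s.Periodic n)
    (hs : ∀ i, M.PerfectPair (s i) (s (i + 1))) (j : ℕ) : M.IsPerfect (s j) :=
  ⟨n, fun i => s (i + j), hn, by simp,
    fun i => by simpa [Nat.add_right_comm] using hper (i + j),
    fun i => by simpa [Nat.add_right_comm] using hs (i + j)⟩

theorem IsPerfect.of_perfectPair (h : M.PerfectPair p q) (hq : M.IsPerfect q) :
    M.IsPerfect p := by
  obtain ⟨n, s, hn, rfl, hper, hs⟩ := hq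
  have hlast : M.PerfectPair (s (n - 1)) (s 0) := by
    simpa [Nat.sub_add_cancel hn, ← hper 0] using hs (n - 1)
  rw [h.left_unique hlast]
  exact isPerfect_of_periodic hn hper hs (n - 1)

variable {w : ℕ → List E}

theorem isPerfect_zero_of_perfectPair_chain (hw : ∀ i, M.PerfectPair (w i) (w (i + 1))) {n : ℕ}
    (hn : M.IsPerfect (w n)) : M.IsPerfect (w 0) := by
  induction n with
  | zero => exact hn
  | succ n ih => exact ih (hn.of_perfectPair (hw n))

theorem isPerfect_of_perfectPair_chain_eq (hw : ∀ i, M.PerfectPair (w i) (w (i + 1))) {a b : ℕ}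
    (hab : a < b) (heq : w a = w b) : M.IsPerfect (w a) := by
  set d := b - a
  have hd : 0 < d := Nat.sub_pos_of_lt hab
  have hcycle : ∀ i, M.PerfectPair (w (a + i % d)) (w (a + (i + 1) % d)) := fun i => by
    rw [← Nat.mod_add_mod]
    rcases Nat.lt_or_ge (i % d + 1) d with hlt | hge
    · rw [Nat.mod_eq_of_lt hlt]
      exact hw _
    · have hi : i % d + 1 = d := le_antisymm (Nat.mod_lt i hd) hge
      rw [hi, Nat.mod_self, Nat.add_zero, heq]
      convert hw (a + i % d) using 2
      omega
  simpa using isPerfect_of_periodic hd (fun i => by simp) hcycle 0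

theorem isPerfect_of_finite_range (hw : ∀ i, M.PerfectPair (w i) (w (i + 1)))
    (hfin : (Set.range w).Finite) : M.IsPerfect (w 0) := by
  obtain ⟨a, b, hab, heq⟩ := hfin.exists_lt_map_eq_of_forall_mem (f := w) Set.mem_range_self
  exact isPerfect_zero_of_perfectPair_chain hw (isPerfect_of_perfectPair_chain_eq hw hab heq)

theorem isPerfect_of_forall_step {J : ℕ → List E → Prop} (hfin : {μ | ∃ k, J k μ}.Finite)
    (hstep : ∀ k μ, J k μ → M.IsPerfect μ ∨ ∃ μ', M.PerfectPair μ μ' ∧ J (k + 1) μ')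
    {r : List E} (hr : J 0 r) : M.IsPerfect r := by
  by_contra hnot
  obtain ⟨f, hf0, hf⟩ := exists_seq_of_forall_exists
    (P := fun s : ℕ × List E => J s.1 s.2 ∧ ¬ M.IsPerfect s.2)
    (R := fun s t => M.PerfectPair s.2 t.2) (a := (0, r)) ⟨hr, hnot⟩ <| by
      rintro ⟨k, μ⟩ ⟨hμ, hnμ⟩
      rcases hstep k μ hμ with h | ⟨μ', hpair, hμ'⟩
      · exact absurd h hnμ
      · exact ⟨(k + 1, μ'), hpair, hμ', fun h => hnμ (h.of_perfectPair hpair)⟩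
  have hrange : Set.range (fun n => (f n).2) ⊆ {μ | ∃ k, J k μ} := by
    rintro _ ⟨n, rfl⟩
    exact ⟨(f n).1, (hf n).1.1⟩
  exact hnot <| by
    simpa [hf0] using isPerfect_of_finite_range (fun n => (hf n).2) (hfin.subset hrange)

end PerfectPair

section Overlap

variable {a x b e v X' Y' : List E}

theorem PerfectPair.nonzero_append_of_suffix (h : M.PerfectPair (x ++ b) Y') (hx : x ≠ []) :
    M.Nonzero (b ++ Y') := by
  have ⟨_, _, hYnz, hY'nz, hc, _⟩ := h
  rcases eq_or_ne b [] with rfl | hb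
  · simpa using hY'nz
  have hbnz : M.Nonzero b := hYnz.infix (List.suffix_append x b).isInfix
  have hbc : M.Composable b Y' := (composable_append_left_iff hb).mp hc
  refine ⟨(isPath_append _).mpr ⟨hbnz.1, hY'nz.1, hbc⟩, fun hz => ?_⟩
  have := (h.suffix_of_isZero hb hbnz hbc hz).length_le
  simp only [List.length_append] at this
  exact hx (List.eq_nil_of_length_eq_zero (by omega))

theorem PerfectPair.exists_eq_append_prefix (hX : M.PerfectPair (a ++ x) X')
    (hY : M.PerfectPair (x ++ b) Y') (hx : x ≠ []) (hnz : M.Nonzero (a ++ x ++ b)) :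
    ∃ e, X' = b ++ e ∧ e ≠ [] ∧ e <+: Y' := by
  have ⟨_, _, _, _, _, hXz, _⟩ := hX
  have ⟨_, hY', _, hY'nz, hYc, hYz, _⟩ := hY
  have hpath : M.IsPath (a ++ x ++ b ++ Y') := by
    refine (isPath_append _).mpr ⟨hnz.1, hY'nz.1, ?_⟩
    rwa [List.append_assoc, composable_append_left_iff (by simp [hx])]
  have hXbY : X' <+: b ++ Y' := by
    refine hX.prefix_of_isZero (by simp [hY']) (hY.nonzero_append_of_suffix hx) ?_ ?_
    · exact ((isPath_append _).mp (by simpa only [List.append_assoc] using hpath)).2.2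
    · exact hYz.mono ⟨a, [], by simp⟩
  have hlen : b.length < X'.length := by
    by_contra! hle
    obtain ⟨c, hc⟩ := List.prefix_of_prefix_length_le hXbY (List.prefix_append b Y') hle
    exact hnz.2 (hXz.mono ⟨[], c, by simp [← hc]⟩)
  obtain ⟨e, rfl⟩ := List.prefix_of_prefix_length_le (List.prefix_append b Y') hXbY hlen.le
  refine ⟨e, rfl, fun he => by simp [he] at hlen, (List.prefix_append_right_inj b).mp hXbY⟩

theorem PerfectPair.union (hX : M.PerfectPair (a ++ x) (b ++ e))
    (hY : M.PerfectPair (x ++ b) (e ++ v)) (hx : x ≠ []) (hb : b ≠ []) (he : e ≠ [])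
    (hnz : M.Nonzero (a ++ x ++ b)) : M.PerfectPair (a ++ x ++ b) e := by
  have ⟨_, _, _, hX'nz, _, hXz, _⟩ := hX
  have ⟨_, _, hYnz, _⟩ := hY
  have hbe : M.Composable b e := ((isPath_append _).mp hX'nz.1).2.2
  refine ⟨by simp [hx], he, hnz, hX'nz.infix (List.suffix_append b e).isInfix,
    (composable_append_left_iff hb).mpr hbe, by simpa using hXz, ?_, ?_⟩
  · intro z hz hznz hzc hzz
    have hbz : M.Composable b z := (composable_append_left_iff hb).mp hzc
    by_cases hbz0 : M.IsZero (b ++ z)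
    · refine (List.prefix_append e v).trans (hY.prefix_of_isZero hz hznz ?_ ?_)
      · exact (composable_append_left_iff hb).mpr hbz
      · exact hbz0.mono ⟨x, [], by simp⟩
    · have hxb : M.Composable (a ++ x) b := ((isPath_append _).mp hnz.1).2.2
      refine (List.prefix_append_right_inj b).mp (hX.prefix_of_isZero (by simp [hb])
        ⟨(isPath_append _).mpr ⟨hX'nz.1.infix (List.prefix_append b e).isInfix, hznz.1, hbz⟩,
          hbz0⟩ ((composable_append_right_iff hb).mpr hxb) (by simpa using hzz))
  · intro y hy hynz hyc hyz
    obtain ⟨y₀, rfl⟩ := hY.suffix_of_isZero hy hynz ((composable_append_right_iff he).mpr hyc)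
      (hyz.mono ⟨[], v, by simp⟩)
    have hxbe : M.Composable x (b ++ e) :=
      (composable_append_right_iff hb).mpr ((isPath_append _).mp hYnz.1).2.2
    obtain ⟨t, ht⟩ := hX.suffix_of_isZero (l := y₀ ++ x) (by simp [hx])
      (hynz.infix ⟨[], b, by simp⟩) ((composable_append_left_iff hx).mpr hxbe)
      (by simpa using hyz)
    have hty : t ++ a = y₀ := List.append_cancel_right (by simpa using ht)
    exact ⟨t, by simp [← hty]⟩

theorem PerfectPair.inter (hX : M.PerfectPair (a ++ x) (b ++ e))
    (hY : M.PerfectPair (x ++ b) (e ++ v)) (hx : x ≠ []) (hb : b ≠ []) (he : e ≠ []) :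
    M.PerfectPair x (b ++ e ++ v) := by
  have ⟨_, _, hYnz, _, _, hYz, _⟩ := hY
  have hbev : M.Nonzero (b ++ e ++ v) := by
    simpa using hY.nonzero_append_of_suffix hx
  have hxb : M.Composable x b := ((isPath_append _).mp hYnz.1).2.2
  refine ⟨hx, by simp [hb], hYnz.infix (List.prefix_append x b).isInfix, hbev,
    by simpa [List.append_assoc, composable_append_right_iff hb] using hxb,
    by simpa using hYz, ?_, ?_⟩
  · intro z hz hznz hzc hzz
    obtain ⟨t, rfl⟩ := hX.prefix_of_isZero hz hznz ((composable_append_left_iff hx).mpr hzc)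
      (hzz.mono ⟨a, [], by simp⟩)
    have hbet : M.Composable b (e ++ t) :=
      ((isPath_append _).mp (by simpa only [List.append_assoc] using hznz.1)).2.2
    have hvt : e ++ v <+: e ++ t :=
      hY.prefix_of_isZero (by simp [he]) (hznz.infix ⟨b, [], by simp⟩)
        ((composable_append_left_iff hb).mpr hbet) (by simpa using hzz)
    simpa using (List.prefix_append_right_inj b).mpr hvt
  · intro y hy hynz hyc hyz
    have hyb : M.Composable y b := by
      simpa [List.append_assoc, composable_append_right_iff hb] using hyc
    by_cases hyb0 : M.IsZero (y ++ b)
    · exact (List.suffix_append a x).trans (hX.suffix_of_isZero hy hynz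
        ((composable_append_right_iff hb).mpr hyb) (hyb0.mono ⟨[], e, by simp⟩))
    · have hbev' : M.Composable b (e ++ v) :=
        ((isPath_append _).mp (by simpa only [List.append_assoc] using hbev.1)).2.2
      obtain ⟨t, ht⟩ := hY.suffix_of_isZero (by simp [hb])
        ⟨(isPath_append _).mpr ⟨hynz.1, hbev.1.infix ⟨[], e ++ v, by simp⟩, hyb⟩, hyb0⟩
        ((composable_append_left_iff hb).mpr hbev') (by simpa using hyz)
      exact ⟨t, List.append_cancel_right (by simpa using ht)⟩

end Overlap

section Stage

variable {sp sq : ℕ → List E} {k : ℕ} {μ : List E}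

/-- `μ` is the union or the intersection of an overlap of `sp k` with `sq k`. -/
def OverlapStage (M : MonomialData V E) (sp sq : ℕ → List E) (k : ℕ) (μ : List E) : Prop :=
  ∃ a x b, sp k = a ++ x ∧ sq k = x ++ b ∧ x ≠ [] ∧ M.Nonzero (a ++ x ++ b) ∧
    (μ = a ++ x ++ b ∨ μ = x)

theorem OverlapStage.sublist (h : OverlapStage M sp sq k μ) :
    μ.Sublist (sp k ++ sq k) := by
  obtain ⟨a, x, b, hX, hY, -, -, rfl | rfl⟩ := h
  · rw [hX, hY]
    exact (List.sublist_append_right _ b).append_left _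
  · rw [hY]
    exact ((List.prefix_append _ b).isInfix.sublist).trans (List.sublist_append_right _ _)

theorem OverlapStage.step (hsp : ∀ i, M.PerfectPair (sp i) (sp (i + 1)))
    (hsq : ∀ i, M.PerfectPair (sq i) (sq (i + 1))) (h : OverlapStage M sp sq k μ) :
    μ = sp k ∨ μ = sq k ∨ ∃ μ', M.PerfectPair μ μ' ∧ OverlapStage M sp sq (k + 1) μ' := by
  obtain ⟨a, x, b, hX, hY, hx, hnz, hμ⟩ := h
  rcases eq_or_ne b [] with rfl | hb
  · rcases hμ with rfl | rfl <;> simp [hX, hY]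
  have hXX := hsp k
  have hYY := hsq k
  rw [hX] at hXX
  rw [hY] at hYY
  obtain ⟨e, hXe, he, v, hYv⟩ := hXX.exists_eq_append_prefix hYY hx hnz
  rw [hXe] at hXX
  rw [← hYv] at hYY
  have hnext : ∀ μ', μ' = b ++ e ++ v ∨ μ' = e → OverlapStage M sp sq (k + 1) μ' :=
    fun μ' hμ' => ⟨b, e, v, hXe, hYv.symm, he,
      by simpa using hYY.nonzero_append_of_suffix hx, hμ'⟩
  rcases hμ with rfl | rfl
  · exact Or.inr (Or.inr ⟨e, hXX.union hYY hx hb he hnz, hnext e (Or.inr rfl)⟩)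
  · exact Or.inr (Or.inr ⟨_, hXX.inter hYY hx hb he, hnext _ (Or.inl rfl)⟩)

theorem OverlapStage.finite {np nq : ℕ} (hp : sp.Periodic np) (hnp : 0 < np)
    (hq : sq.Periodic nq) (hnq : 0 < nq) : {μ | ∃ k, OverlapStage M sp sq k μ}.Finite := by
  have hper : (fun k => sp k ++ sq k).Periodic (np * nq) := fun k =>
    congrArg₂ (· ++ ·) (by simpa [mul_comm] using hp.nsmul nq k) (by simpa using hq.nsmul np k)
  refine ((hper.finite_range_nat (Nat.mul_pos hnp hnq)).biUnion
    fun L _ => L.sublists.finite_toSet).subset ?_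
  rintro μ ⟨k, hk⟩
  simpa using ⟨k, hk.sublist⟩

end Stage

end MonomialData

theorem mem_inter_not_mem_perfect_general {V E : Type} (M : MonomialData V E)
    (p q r : List E) (hp : M.IsPerfect p) (hq : M.IsPerfect q)
    (hr : M.Nonzero r)
    (h1 : p <+: r) (h2 : q <:+ r) (h3 : ¬ ∃ w, r = p ++ w ++ q) :
    M.IsPerfect r := by
  obtain ⟨a, x, b, rfl, rfl, rfl, hx⟩ := List.exists_overlap_of_prefix_of_suffix h1 h2 h3
  obtain ⟨np, sp, hnp, hsp0, hperp, hsp⟩ := hp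
  obtain ⟨nq, sq, hnq, hsq0, hperq, hsq⟩ := hq
  refine MonomialData.isPerfect_of_forall_step (J := MonomialData.OverlapStage M sp sq)
    (MonomialData.OverlapStage.finite hperp hnp hperq hnq) (fun k μ hμ => ?_)
    ⟨a, x, b, hsp0, hsq0, hx, hr, Or.inl rfl⟩
  rcases hμ.step hsp hsq with rfl | rfl | hnext
  · exact Or.inl (MonomialData.isPerfect_of_periodic hnp hperp hsp k)
  · exact Or.inl (MonomialData.isPerfect_of_periodic hnq hperq hsq k)
  · exact Or.inr hnext

/-- if the perfect path `p` overlaps the perfect path `q`, then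
any nonzero path lying in `pΛ ∩ Λq` (i.e. having `p` as a left divisor and
`q` as a right divisor) that does not lie in `pΛq` is itself perfect. -/
theorem mem_inter_not_mem_perfect {V E : Type} (M : MonomialData V E)
    (p q r : List E) (hp : M.IsPerfect p) (hq : M.IsPerfect q)
    (hov : M.Overlap p q) (hr : M.Nonzero r)
    (h1 : p <+: r) (h2 : q <:+ r) (h3 : ¬ ∃ w, r = p ++ w ++ q) :
    M.IsPerfect r :=
  mem_inter_not_mem_perfect_general M p q r hp hq hr h1 h2 h3
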